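/- Assume A is generic, m ≤ r-n+1, 1 ≤ j ≤ n, and let H ∈ A^{(n-j)}. Choose A' ⊆ A with |A'| = m+n-1 and H ⊆ A'. Then {δ_{H∪H'}^m : H' ∈ (A'\H)^{(j-1)}} is a K-basis of Δ_H := Σ_{H' ∈ (A\H)^{(j-1)}} K·δ_{H∪H'}^m, and dim_K Δ_H = binom(m+j-1, j-1). -/

import Mathlib

open MvPolynomial

/-- The linear form `Σ v_j x_j` with coefficient vector `v`. -/
noncomputable def lf {K : Type*} [Field K] {n : ℕ} (v : Fin n → K) :
    MvPolynomial (Fin n) K :=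
  ∑ j, MvPolynomial.C (v j) * MvPolynomial.X j

/-- `∂^α = ∂_1^{α_1} ⋯ ∂_n^{α_n}` as a `K`-linear endomorphism of the polynomial ring. -/
noncomputable def pdOp (K : Type*) [Field K] (n : ℕ) (α : Fin n → ℕ) :
    Module.End K (MvPolynomial (Fin n) K) :=
  (List.ofFn fun j : Fin n =>
    ((MvPolynomial.pderiv j).toLinearMap : Module.End K (MvPolynomial (Fin n) K)) ^ (α j)).prod

/-- The constant coefficient derivation `Σ d_j ∂_j`. -/
noncomputable def delOp (K : Type*) [Field K] (n : ℕ) (d : Fin n → K) :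
    Module.End K (MvPolynomial (Fin n) K) :=
  ∑ j, d j • ((MvPolynomial.pderiv j).toLinearMap : Module.End K (MvPolynomial (Fin n) K))

/-- The `S`-module of differential operators homogeneous of order `m`,
i.e. `S`-linear combinations of the `∂^α` with `|α| = m`. -/
noncomputable def homOrder (K : Type*) [Field K] (n m : ℕ) :
    Submodule (MvPolynomial (Fin n) K) (Module.End K (MvPolynomial (Fin n) K)) :=
  Submodule.span (MvPolynomial (Fin n) K)
    {θ | ∃ α : Fin n → ℕ, (∑ j, α j) = m ∧ θ = pdOp K n α}

/-- The operators preserving the principal ideal `QS`. -/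
noncomputable def presIdeal (K : Type*) [Field K] (n : ℕ) (Q : MvPolynomial (Fin n) K) :
    Submodule (MvPolynomial (Fin n) K) (Module.End K (MvPolynomial (Fin n) K)) where
  carrier := {θ | ∀ f, Q ∣ f → Q ∣ θ f}
  add_mem' := by
    intro θ₁ θ₂ h₁ h₂ f hf
    simpa using dvd_add (h₁ f hf) (h₂ f hf)
  zero_mem' := by intro f hf; simp
  smul_mem' := by
    intro c θ hθ f hf
    simpa [smul_eq_mul] using Dvd.dvd.mul_left (hθ f hf) c

/-- `D^{(m)}(𝒜)`, for the arrangement defined by `Q`. -/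
noncomputable def Dmod (K : Type*) [Field K] (n : ℕ) (Q : MvPolynomial (Fin n) K) (m : ℕ) :
    Submodule (MvPolynomial (Fin n) K) (Module.End K (MvPolynomial (Fin n) K)) :=
  homOrder K n m ⊓ presIdeal K n Q

/-- The Euler operator of order `m`. -/
noncomputable def euler (K : Type*) [Field K] (n m : ℕ) :
    Module.End K (MvPolynomial (Fin n) K) :=
  ∑ α ∈ Finset.Nat.antidiagonalTuple n m,
    ((Nat.multinomial Finset.univ α : MvPolynomial (Fin n) K) *
      ∏ j, MvPolynomial.X j ^ α j) • pdOp K n α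

/-- `θ` is homogeneous (of order `m`) of polynomial degree `p`. -/
def homogOfPdeg (K : Type*) [Field K] (n m p : ℕ)
    (θ : Module.End K (MvPolynomial (Fin n) K)) : Prop :=
  ∃ c : (Fin n → ℕ) → MvPolynomial (Fin n) K,
    (∀ α, (c α).IsHomogeneous p) ∧
    θ = ∑ α ∈ Finset.Nat.antidiagonalTuple n m, c α • pdOp K n α

/-- A generic arrangement: any `n` of the defining linear forms are linearly independent. -/
def Generic {K : Type*} [Field K] {n r : ℕ} (a : Fin r → (Fin n → K)) : Prop :=
  ∀ s : Finset (Fin r), s.card = n → LinearIndependent K (fun i : s => a (i : Fin r))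

/-- `P_𝓗 = ∏_{H ∉ 𝓗} p_H`. -/
noncomputable def PH {K : Type*} [Field K] {n r : ℕ} (a : Fin r → (Fin n → K))
    (H : Finset (Fin r)) : MvPolynomial (Fin n) K :=
  ∏ i ∈ Hᶜ, lf (a i)

/-- `x^α/α!`. -/
noncomputable def monDiv (K : Type*) [Field K] (n : ℕ) (α : Fin n → ℕ) :
    MvPolynomial (Fin n) K :=
  MvPolynomial.C (((∏ j, (α j).factorial : ℕ) : K))⁻¹ * ∏ j, MvPolynomial.X j ^ α j

/-!
Every `δ_{𝓗 ∪ G}` is orthogonal to the `a_i`, `i ∈ 𝓗`, which are linearly independent by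
genericity, so all of them lie in a `j`-dimensional space `W`. Constant-coefficient derivations
commute, so the `m`-th powers `δ_v^m`, `v ∈ W`, lie in the span of the degree-`m` monomials in
`δ_{w_1}, …, δ_{w_j}` for a basis `w` of `W`: at most `binom(m+j-1, m)` operators.

Conversely, for `G, G' ⊆ 𝓐' ∖ 𝓗` of size `j - 1`, applying `δ_{𝓗 ∪ G}^m` to the product of the
`m` linear forms `p_i`, `i ∈ (𝓐' ∖ 𝓗) ∖ G'`, gives the constant `m! ∏ ⟨δ_{𝓗 ∪ G}, a_i⟩`. By
genericity it vanishes exactly when `G ≠ G'`, and this diagonal pairing makes the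
`binom(m+j-1, j-1)` operators indexed by such `G` linearly independent.
-/

namespace Derivation

variable {R A ι : Type*} [CommRing R] [CommRing A] [Algebra R A]

theorem leibniz_finset_prod [DecidableEq ι] (D : Derivation R A A) (f : ι → A) (T : Finset ι) :
    D (∏ i ∈ T, f i) = ∑ i ∈ T, (∏ j ∈ T.erase i, f j) • D (f i) := by
  induction T using Finset.induction_on with
  | empty => simp
  | @insert a T ha ih =>
    rw [Finset.prod_insert ha, leibniz, ih, Finset.sum_insert ha, Finset.erase_insert ha,
      Finset.smul_sum, add_comm]
    congr 1
    refine Finset.sum_congr rfl fun i hi => ?_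
    rw [Finset.erase_insert_of_ne (ne_of_mem_of_not_mem hi ha).symm, Finset.prod_insert
      (fun h => ha (Finset.mem_of_mem_erase h)), smul_smul]

theorem pow_card_apply_prod (D : Derivation R A A) (f : ι → A) (c : ι → R)
    (hf : ∀ i, D (f i) = algebraMap R A (c i)) (T : Finset ι) :
    ((D : Module.End R A) ^ T.card) (∏ i ∈ T, f i) =
      algebraMap R A (T.card.factorial * ∏ i ∈ T, c i) := by
  classical
  induction hk : T.card generalizing T with
  | zero => simp [Finset.card_eq_zero.mp hk]
  | succ k ih =>
    have hterm : ∀ i ∈ T, ((D : Module.End R A) ^ k) ((∏ j ∈ T.erase i, f j) • D (f i)) =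
        algebraMap R A (k.factorial * ∏ j ∈ T, c j) := by
      intro i hi
      rw [hf, smul_eq_mul, mul_comm, ← Algebra.smul_def, _root_.map_smul,
        ih _ (by rw [Finset.card_erase_of_mem hi, hk]; rfl), ← Finset.mul_prod_erase T c hi,
        Algebra.smul_def, ← map_mul, mul_left_comm]
    rw [pow_succ, Module.End.mul_apply, coeFn_coe, leibniz_finset_prod, map_sum,
      Finset.sum_congr rfl hterm, Finset.sum_const, hk, nsmul_eq_mul,
      ← _root_.map_natCast (algebraMap R A), ← map_mul, Nat.factorial_succ]
    push_cast
    ring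

end Derivation

section ConstantCoefficient

variable {K : Type*} [Field K] {n : ℕ}

noncomputable def delDer (v : Fin n → K) :
    Derivation K (MvPolynomial (Fin n) K) (MvPolynomial (Fin n) K) :=
  ∑ j, v j • pderiv j

theorem delOp_eq_delDer (v : Fin n → K) : delOp K n v = delDer v := by
  refine LinearMap.ext fun p => ?_
  change _ = Derivation.coeFnAddMonoidHom (∑ j, v j • pderiv j) p
  simp [delOp, map_sum, Derivation.coeFnAddMonoidHom_apply]

theorem delOp_lf (v u : Fin n → K) : delOp K n v (lf u) = C (v ⬝ᵥ u) := by
  simp [delOp, lf, dotProduct, pderiv_X, Pi.single_apply, smul_eq_C_mul]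

theorem delOp_pow_card_apply_prod_lf {ι : Type*} (v : Fin n → K) (a : ι → Fin n → K)
    (T : Finset ι) :
    (delOp K n v ^ T.card) (∏ i ∈ T, lf (a i)) = C (T.card.factorial * ∏ i ∈ T, v ⬝ᵥ a i) := by
  rw [delOp_eq_delDer, ← algebraMap_eq]
  refine (delDer v).pow_card_apply_prod _ _ (fun i => ?_) T
  rw [← Derivation.coeFn_coe, ← delOp_eq_delDer, delOp_lf, algebraMap_eq]

theorem pderiv_pderiv_comm (i j : Fin n) (p : MvPolynomial (Fin n) K) :
    pderiv i (pderiv j p) = pderiv j (pderiv i p) := by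
  induction p using MvPolynomial.induction_on with
  | C a => simp
  | add p q hp hq => simp [hp, hq]
  | mul_X p k hp =>
    simp only [pderiv_mul, map_add, hp, pderiv_X, Pi.single_apply,
      apply_ite (pderiv i), apply_ite (pderiv j), pderiv_one, map_zero, ite_self, mul_zero,
      add_zero]
    ring

theorem delOp_commute (v u : Fin n → K) : Commute (delOp K n v) (delOp K n u) := by
  refine LinearMap.ext fun p => ?_
  simp only [Module.End.mul_apply, delOp, LinearMap.sum_apply, LinearMap.smul_apply,
    Derivation.coeFn_coe, map_sum, map_smul, Finset.smul_sum]
  rw [Finset.sum_comm]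
  exact Finset.sum_congr rfl fun i _ => Finset.sum_congr rfl fun k _ => by
    rw [pderiv_pderiv_comm, smul_comm]

noncomputable def delOpₗ : (Fin n → K) →ₗ[K] Module.End K (MvPolynomial (Fin n) K) where
  toFun := delOp K n
  map_add' u v := by simp [delOp, add_smul, Finset.sum_add_distrib]
  map_smul' c u := by simp [delOp, smul_smul, Finset.smul_sum]

end ConstantCoefficient

section LinearAlgebra

variable {K V ι : Type*} [Field K] [AddCommGroup V] [Module K V]

theorem linearIndependent_of_diagonal_pairing {W : Type*} [AddCommGroup W] [Module K W]
    (f : ι → V) (φ : ι → V →ₗ[K] W) (hdiag : ∀ i, φ i (f i) ≠ 0)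
    (hoff : ∀ i k, k ≠ i → φ i (f k) = 0) : LinearIndependent K f := by
  classical
  rw [linearIndependent_iff']
  intro s g hg i hi
  have h := congrArg (φ i) hg
  rw [map_sum, Finset.sum_eq_single i (fun k _ hk => by rw [map_smul, hoff i k hk, smul_zero])
    (absurd hi), map_smul, map_zero] at h
  exact (smul_eq_zero.mp h).resolve_right (hdiag i)

theorem LinearIndependent.exists_basis_span_of_card_le [Fintype ι] {S : Set V} {f : ι → V}
    (hf : LinearIndependent K f) (hfS : ∀ i, f i ∈ S) {s : Finset V}
    (hSs : S ⊆ Submodule.span K (s : Set V)) (hs : s.card ≤ Fintype.card ι) :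
    (∃ b : Module.Basis ι K (Submodule.span K S), ∀ i, (b i : V) = f i) ∧
      Module.finrank K (Submodule.span K S) = Fintype.card ι := by
  have hle : Submodule.span K S ≤ Submodule.span K s := Submodule.span_le.mpr hSs
  have : FiniteDimensional K (Submodule.span K S) := Submodule.finiteDimensional_of_le hle
  let f' : ι → Submodule.span K S := fun i => ⟨f i, Submodule.subset_span (hfS i)⟩
  have hf' : LinearIndependent K f' := LinearIndependent.of_comp (Submodule.span K S).subtype hf
  have hcard : Fintype.card ι = Module.finrank K (Submodule.span K S) :=
    le_antisymm hf'.fintype_card_le_finrank <|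
      (Submodule.finrank_mono hle).trans ((finrank_span_finset_le_card s).trans hs)
  exact ⟨⟨basisOfLinearIndependentOfCardEqFinrank' f' hf' hcard, fun i => by simp [f']⟩,
    hcard.symm⟩

theorem eq_zero_of_dotProduct_eq_zero_of_span_eq_top {m : Type*} [Fintype m] {u : ι → m → K}
    (hu : Submodule.span K (Set.range u) = ⊤) {v : m → K} (hv : ∀ i, v ⬝ᵥ u i = 0) :
    v = 0 := by
  have h : dotProductBilin K K v = 0 := LinearMap.ext_on_range hu (by simpa using hv)
  exact dotProduct_eq_zero_iff.mp fun w => LinearMap.congr_fun h w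

theorem Matrix.finrank_ker_mulVecLin_of_linearIndependent_row {m : Type*} [Fintype ι]
    [Fintype m] {M : Matrix ι m K} (hM : LinearIndependent K M.row) :
    Module.finrank K (LinearMap.ker M.mulVecLin) = Fintype.card m - Fintype.card ι := by
  have h := LinearMap.finrank_range_add_finrank_ker M.mulVecLin
  rw [← Matrix.rank, hM.rank_matrix, Module.finrank_fintype_fun_eq_card] at h
  omega

end LinearAlgebra

section PowerSpan

variable {K : Type*} [Field K]

theorem pow_mem_span_sym {A : Type*} [CommSemiring A] [Algebra K A] {τ : Type*} [Fintype τ]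
    (y : τ → A) (c : τ → K) (m : ℕ) :
    (∑ q, c q • y q) ^ m ∈
      Submodule.span K (Set.range fun s : Sym τ m => (s.toMultiset.map y).prod) := by
  induction m with
  | zero => exact Submodule.subset_span ⟨Sym.nil, by simp⟩
  | succ m ih =>
    rw [pow_succ']
    have key : Submodule.span K (Set.range fun s : Sym τ m => (s.toMultiset.map y).prod) ≤
        (Submodule.span K (Set.range fun s : Sym τ (m + 1) => (s.toMultiset.map y).prod)).comap
          (LinearMap.mulLeft K (∑ q, c q • y q)) := by
      refine Submodule.span_le.mpr ?_
      rintro _ ⟨s, rfl⟩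
      rw [SetLike.mem_coe, Submodule.mem_comap, LinearMap.mulLeft_apply, Finset.sum_mul]
      refine Submodule.sum_mem _ fun q _ => ?_
      rw [smul_mul_assoc]
      exact Submodule.smul_mem _ _ (Submodule.subset_span ⟨q ::ₛ s, by simp [Sym.cons]⟩)
    exact key ih

open scoped IsMulCommutative in
theorem exists_finset_card_le_pow_mem_span {A V : Type*} [Ring A] [Algebra K A]
    [AddCommGroup V] [Module K V] (D : V →ₗ[K] A) (hD : ∀ v w, Commute (D v) (D w))
    (W : Submodule K V) [FiniteDimensional K W] (m : ℕ) :
    ∃ s : Finset A, s.card ≤ (Module.finrank K W + m - 1).choose m ∧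
      ∀ v ∈ W, D v ^ m ∈ Submodule.span K (s : Set A) := by
  classical
  have : IsMulCommutative (Algebra.adjoin K (Set.range D)) :=
    Algebra.isMulCommutative_adjoin K (by rintro _ ⟨v, rfl⟩ _ ⟨w, rfl⟩; exact hD v w)
  let b := Module.finBasis K W
  let y : Fin (Module.finrank K W) → Algebra.adjoin K (Set.range D) :=
    fun q => ⟨D (b q), Algebra.subset_adjoin ⟨_, rfl⟩⟩
  let μ : Sym (Fin (Module.finrank K W)) m → A := fun s => ((s.toMultiset.map y).prod : _)
  refine ⟨Finset.univ.image μ, ?_, fun v hv => ?_⟩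
  · calc (Finset.univ.image μ).card ≤ Fintype.card (Sym (Fin (Module.finrank K W)) m) :=
          Finset.card_image_le
      _ = _ := by rw [Sym.card_sym_eq_choose, Fintype.card_fin]
  · set c := b.repr ⟨v, hv⟩
    have hv' : v = ∑ q, c q • (b q : V) := by
      have h := congrArg W.subtype (b.sum_repr ⟨v, hv⟩)
      rw [map_sum] at h
      simpa [c] using h.symm
    have hDv : D v = ((∑ q, c q • y q : Algebra.adjoin K (Set.range D)) : A) := by
      rw [hv']
      simp [y]
    have h := Submodule.mem_map_of_mem (f := (Algebra.adjoin K (Set.range D)).val.toLinearMap)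
      (pow_mem_span_sym y c m)
    rw [Submodule.map_span, ← Set.range_comp] at h
    rw [hDv, Finset.coe_image, Finset.coe_univ, Set.image_univ]
    exact h

end PowerSpan

namespace Generic

variable {K : Type*} [Field K] {n r : ℕ} {a : Fin r → Fin n → K}

theorem linearIndependent_of_card_le (hgen : Generic a) (hr : n ≤ r) {s : Finset (Fin r)}
    (hs : s.card ≤ n) : LinearIndependent K (fun i : s => a i) := by
  obtain ⟨t, hst, ht⟩ := Finset.exists_superset_card_eq hs (by simpa using hr)
  exact (hgen t ht).comp (fun i : s => (⟨i, hst i.2⟩ : t))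
    fun i j h => Subtype.ext (Subtype.mk.inj h)

theorem dotProduct_eq_zero_iff_mem (hgen : Generic a) {G : Finset (Fin r)}
    (hG : G.card + 1 = n) {v : Fin n → K} (hv : v ≠ 0) (hperp : ∀ i ∈ G, v ⬝ᵥ a i = 0)
    (i : Fin r) : v ⬝ᵥ a i = 0 ↔ i ∈ G := by
  refine ⟨fun hvi => by_contra fun hi => hv ?_, hperp i⟩
  have hcard : (insert i G).card = n := by rw [Finset.card_insert_of_notMem hi, hG]
  have hspan : Submodule.span K (Set.range fun x : (insert i G : Finset (Fin r)) => a x) = ⊤ :=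
    (hgen _ hcard).span_eq_top_of_card_eq_finrank'
      (by rw [Fintype.card_coe, hcard, Module.finrank_fin_fun])
  refine eq_zero_of_dotProduct_eq_zero_of_span_eq_top hspan fun x => ?_
  rcases Finset.mem_insert.mp x.2 with h | h
  · rw [h]; exact hvi
  · exact hperp _ h

theorem finrank_ker_mulVecLin (hgen : Generic a) (hr : n ≤ r) {s : Finset (Fin r)}
    (hs : s.card ≤ n) :
    Module.finrank K (LinearMap.ker (Matrix.of fun i : s => a i).mulVecLin) = n - s.card := by
  rw [Matrix.finrank_ker_mulVecLin_of_linearIndependent_row (M := Matrix.of fun i : s => a i)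
    (hgen.linearIndependent_of_card_le hr hs), Fintype.card_fin, Fintype.card_coe]

end Generic

section LowerBound

variable {K ι : Type*} [Field K] [CharZero K] [DecidableEq ι] {n : ℕ}

theorem linearIndependent_delOp_pow (a : ι → Fin n → K) (v : Finset ι → Fin n → K)
    {T : Finset ι} {k m : ℕ} (hT : T.card = k + m)
    (hv : ∀ G ⊆ T, G.card = k → ∀ i ∈ T, v G ⬝ᵥ a i = 0 ↔ i ∈ G) :
    LinearIndependent K
      (fun G : {G : Finset ι // G ⊆ T ∧ G.card = k} => delOp K n (v G) ^ m) := by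
  have hpair : ∀ G' G : {G : Finset ι // G ⊆ T ∧ G.card = k},
      (delOp K n (v G) ^ m) (∏ i ∈ T \ G', lf (a i)) =
        C ((m.factorial : K) * ∏ i ∈ T \ G', v G ⬝ᵥ a i) := by
    intro G' G
    have hcard : (T \ G').card = m := by
      rw [Finset.card_sdiff_of_subset G'.2.1, hT, G'.2.2]; omega
    simpa [hcard] using delOp_pow_card_apply_prod_lf (v G) a (T \ G')
  refine linearIndependent_of_diagonal_pairing _
    (fun G' => LinearMap.applyₗ (∏ i ∈ T \ G'.1, lf (a i))) (fun G => ?_) (fun G' G hne => ?_)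
  · rw [LinearMap.applyₗ_apply_apply, hpair, Ne, C_eq_zero]
    exact mul_ne_zero (Nat.cast_ne_zero.2 m.factorial_ne_zero)
      (Finset.prod_ne_zero_iff.2 fun i hi =>
        mt (hv _ G.2.1 G.2.2 i (Finset.mem_sdiff.1 hi).1).1 (Finset.mem_sdiff.1 hi).2)
  · have hnsub : ¬ G.1 ⊆ G'.1 := fun h =>
      hne (Subtype.ext (Finset.eq_of_subset_of_card_le h (by rw [G.2.2, G'.2.2])))
    obtain ⟨i, hiG, hiG'⟩ := Finset.not_subset.mp hnsub
    rw [LinearMap.applyₗ_apply_apply, hpair, Finset.prod_eq_zero (Finset.mem_sdiff.2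
      ⟨G.2.1 hiG, hiG'⟩) ((hv _ G.2.1 G.2.2 i (G.2.1 hiG)).2 hiG), mul_zero, map_zero]

end LowerBound

theorem Fintype.card_subtype_subset_card_eq {ι : Type*} [Fintype ι] [DecidableEq ι]
    (T : Finset ι) (k : ℕ) :
    Fintype.card {G : Finset ι // G ⊆ T ∧ G.card = k} = T.card.choose k := by
  rw [Fintype.card_subtype, ← Finset.card_powersetCard]
  congr 1
  ext G
  simp [Finset.mem_powersetCard]

theorem Delta_basis_and_dim_general
    {K : Type*} [Field K] [CharZero K] {n r m j : ℕ}
    (hr : n ≤ r)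
    (hj1 : 1 ≤ j) (hjn : j ≤ n)
    (a : Fin r → (Fin n → K)) (hgen : Generic a)
    (δ : Finset (Fin r) → (Fin n → K))
    (hδ0 : ∀ H : Finset (Fin r), H.card = n - 1 → δ H ≠ 0)
    (hδ : ∀ H : Finset (Fin r), H.card = n - 1 → ∀ i ∈ H, delOp K n (δ H) (lf (a i)) = 0)
    (𝓗 : Finset (Fin r)) (h𝓗 : 𝓗.card = n - j)
    (𝓐' : Finset (Fin r)) (h𝓐' : 𝓐'.card = m + n - 1) (hsub : 𝓗 ⊆ 𝓐') :
    (∃ b : Module.Basis {G : Finset (Fin r) // G ⊆ 𝓐' \ 𝓗 ∧ G.card = j - 1} K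
        ↥(Submodule.span K
          {θ : Module.End K (MvPolynomial (Fin n) K) |
            ∃ G : Finset (Fin r), G ⊆ 𝓗ᶜ ∧ G.card = j - 1 ∧
              θ = (delOp K n (δ (𝓗 ∪ G))) ^ m}),
      ∀ G, (b G : Module.End K (MvPolynomial (Fin n) K))
        = (delOp K n (δ (𝓗 ∪ G.val))) ^ m)
    ∧ Module.finrank K
        ↥(Submodule.span K
          {θ : Module.End K (MvPolynomial (Fin n) K) |
            ∃ G : Finset (Fin r), G ⊆ 𝓗ᶜ ∧ G.card = j - 1 ∧
              θ = (delOp K n (δ (𝓗 ∪ G))) ^ m})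
        = Nat.choose (m + j - 1) (j - 1) := by
  have hcard (G : Finset (Fin r)) (hG : G ⊆ 𝓗ᶜ) (hGc : G.card = j - 1) :
      (𝓗 ∪ G).card = n - 1 := by
    rw [Finset.card_union_of_disjoint (Finset.subset_compl_iff_disjoint_left.mp hG), h𝓗, hGc]
    omega
  have hδG (G : Finset (Fin r)) (hG : G ⊆ 𝓗ᶜ) (hGc : G.card = j - 1) (i : Fin r) :
      δ (𝓗 ∪ G) ⬝ᵥ a i = 0 ↔ i ∈ 𝓗 ∪ G :=
    hgen.dotProduct_eq_zero_iff_mem (by rw [hcard G hG hGc]; omega) (hδ0 _ (hcard G hG hGc))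
      (fun i hi => by simpa [delOp_lf] using hδ _ (hcard G hG hGc) i hi) i
  have hTc : 𝓐' \ 𝓗 ⊆ 𝓗ᶜ := fun x hx => Finset.mem_compl.2 (Finset.mem_sdiff.1 hx).2
  have hT : (𝓐' \ 𝓗).card = j - 1 + m := by
    rw [Finset.card_sdiff_of_subset hsub, h𝓐', h𝓗]; omega
  have hind := linearIndependent_delOp_pow a (fun G => δ (𝓗 ∪ G)) hT
    fun G hG hGc i hi => (hδG G (hG.trans hTc) hGc i).trans
      (Finset.mem_union.trans (or_iff_right (Finset.mem_sdiff.1 hi).2))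
  obtain ⟨s, hs, hmem⟩ := exists_finset_card_le_pow_mem_span delOpₗ delOp_commute
    (LinearMap.ker (Matrix.of fun i : 𝓗 => a i).mulVecLin) m
  rw [hgen.finrank_ker_mulVecLin hr (by omega), h𝓗] at hs
  refine (hind.exists_basis_span_of_card_le (s := s) ?_ ?_ ?_).imp_right fun hrank => ?_
  · exact fun G => ⟨G.1, G.2.1.trans hTc, G.2.2, rfl⟩
  · rintro _ ⟨G, hG, hGc, rfl⟩
    exact hmem _ (funext fun i => (dotProduct_comm _ _).trans
      ((hδG G hG hGc i).2 (Finset.mem_union_left _ i.2)))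
  · rw [Fintype.card_subtype_subset_card_eq, hT, Nat.choose_symm_add]
    convert hs using 2
    omega
  · rw [hrank, Fintype.card_subtype_subset_card_eq, hT]
    congr 1
    omega

/-- for generic `𝒜`, `m ≤ r-n+1`, `1 ≤ j ≤ n`, `𝓗 ∈ 𝒜^{(n-j)}`, and
`𝓐' ⊆ 𝒜` with `|𝓐'| = m+n-1` and `𝓗 ⊆ 𝓐'`, the family
`{δ_{𝓗∪𝓖}^m : 𝓖 ∈ (𝓐'∖𝓗)^{(j-1)}}` is a `K`-basis of
`Δ_𝓗 = Σ_{𝓖 ∈ (𝒜∖𝓗)^{(j-1)}} K·δ_{𝓗∪𝓖}^m`, whose dimension is `binom(m+j-1, j-1)`. -/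
theorem Delta_basis_and_dim
    {K : Type*} [Field K] [CharZero K] {n r m j : ℕ}
    (hn : 2 ≤ n) (hr : n ≤ r) (hm1 : 1 ≤ m) (hm : m ≤ r - n + 1)
    (hj1 : 1 ≤ j) (hjn : j ≤ n)
    (a : Fin r → (Fin n → K)) (hgen : Generic a)
    (δ : Finset (Fin r) → (Fin n → K))
    (hδ0 : ∀ H : Finset (Fin r), H.card = n - 1 → δ H ≠ 0)
    (hδ : ∀ H : Finset (Fin r), H.card = n - 1 → ∀ i ∈ H, delOp K n (δ H) (lf (a i)) = 0)
    (𝓗 : Finset (Fin r)) (h𝓗 : 𝓗.card = n - j)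
    (𝓐' : Finset (Fin r)) (h𝓐' : 𝓐'.card = m + n - 1) (hsub : 𝓗 ⊆ 𝓐') :
    (∃ b : Module.Basis {G : Finset (Fin r) // G ⊆ 𝓐' \ 𝓗 ∧ G.card = j - 1} K
        ↥(Submodule.span K
          {θ : Module.End K (MvPolynomial (Fin n) K) |
            ∃ G : Finset (Fin r), G ⊆ 𝓗ᶜ ∧ G.card = j - 1 ∧
              θ = (delOp K n (δ (𝓗 ∪ G))) ^ m}),
      ∀ G, (b G : Module.End K (MvPolynomial (Fin n) K))
        = (delOp K n (δ (𝓗 ∪ G.val))) ^ m)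
    ∧ Module.finrank K
        ↥(Submodule.span K
          {θ : Module.End K (MvPolynomial (Fin n) K) |
            ∃ G : Finset (Fin r), G ⊆ 𝓗ᶜ ∧ G.card = j - 1 ∧
              θ = (delOp K n (δ (𝓗 ∪ G))) ^ m})
        = Nat.choose (m + j - 1) (j - 1) :=
  Delta_basis_and_dim_general hr hj1 hjn a hgen δ hδ0 hδ 𝓗 h𝓗 𝓐' h𝓐' hsub
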